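/- Derivative operator for noise perturbations: Suppose ρ_ξ ∈ BV([0,1]) and there is a finite signed Borel measure ρ̇ such that ‖(ρ_ξ − ρ₀)/ξ − ρ̇‖_w → 0 as ξ → 0 (where ‖·‖_w is either the L¹ norm or the Wasserstein–Kantorovich norm). Let T be nonsingular and f₀ ∈ L¹([0,1]). Then lim_{ξ→0} ‖ (L_{ξ,T} − L_{0,T})f₀ / ξ − ρ̇ ∗̂ L_T(f₀) ‖_w = 0. -/

import Mathlib

open MeasureTheory Set Filter
open scoped ENNReal NNReal

noncomputable section

/-- The unit interval `[0,1]`. -/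
abbrev II : Set ℝ := Set.Icc (0:ℝ) 1

/-- Lebesgue measure restricted to `[0,1]`. -/
abbrev volI : MeasureTheory.Measure ℝ := MeasureTheory.volume.restrict II

/-- The reflecting boundary map `π(x) = min_{i ∈ ℤ} |x - 2i|`. -/
def reflMap (x : ℝ) : ℝ := ⨅ i : ℤ, |x - 2 * (i : ℝ)|

/-- The Wasserstein–Kantorovich norm `‖μ‖_W = sup {∫ g dμ : ‖g‖_∞ ≤ 1, Lip(g) ≤ 1}`. -/
def Wnorm (m : MeasureTheory.SignedMeasure ℝ) : ℝ :=
  ⨆ g : {g : ℝ → ℝ // (∀ x, |g x| ≤ 1) ∧ LipschitzWith 1 g},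
    (∫ x, g.1 x ∂m.toJordanDecomposition.posPart -
     ∫ x, g.1 x ∂m.toJordanDecomposition.negPart)

/-- The total variation (`L¹`) norm of a signed measure. -/
def tvNorm (m : MeasureTheory.SignedMeasure ℝ) : ℝ :=
  (m.totalVariation Set.univ).toReal

/-- The bounded variation norm `‖g‖_BV = ‖g‖₁ + Var_{[0,1]}(g)` of a function on `[0,1]`. -/
def bvNorm (g : ℝ → ℝ) : ℝ :=
  (∫ x in II, |g x|) + (eVariationOn g II).toReal

/-- `m` is the absolutely continuous measure with density `h`, supported in `[0,1]`. -/
def IsL1Density (m : MeasureTheory.SignedMeasure ℝ) (h : ℝ → ℝ) : Prop :=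
  MeasureTheory.Integrable h MeasureTheory.volume ∧ (∀ x, x ∉ II → h x = 0) ∧
    m = MeasureTheory.volume.withDensityᵥ h

/-- `m` has a bounded variation density `h` on `[0,1]`. -/
def IsBVDensity (m : MeasureTheory.SignedMeasure ℝ) (h : ℝ → ℝ) : Prop :=
  IsL1Density m h ∧ eVariationOn h II ≠ ⊤

/-- The signed measure with (zero-extended) density `f` w.r.t. Lebesgue measure. -/
def densSM (f : ℝ → ℝ) : MeasureTheory.SignedMeasure ℝ :=
  MeasureTheory.volume.withDensityᵥ f

/-- Convolution of two (positive) measures on `ℝ`. -/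
def posConv (a b : MeasureTheory.Measure ℝ) : MeasureTheory.Measure ℝ :=
  (a.prod b).map (fun p => p.1 + p.2)

instance (a b : MeasureTheory.Measure ℝ) [MeasureTheory.IsFiniteMeasure a]
    [MeasureTheory.IsFiniteMeasure b] : MeasureTheory.IsFiniteMeasure (posConv a b) := by
  unfold posConv; infer_instance

/-- Convolution of two finite signed measures, via Jordan decomposition. -/
def mConv (a b : MeasureTheory.SignedMeasure ℝ) : MeasureTheory.SignedMeasure ℝ :=
  (posConv a.toJordanDecomposition.posPart b.toJordanDecomposition.posPart +
    posConv a.toJordanDecomposition.negPart b.toJordanDecomposition.negPart).toSignedMeasure -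
  (posConv a.toJordanDecomposition.posPart b.toJordanDecomposition.negPart +
    posConv a.toJordanDecomposition.negPart b.toJordanDecomposition.posPart).toSignedMeasure

/-- The reflecting-boundary convolution `a ∗̂ b = π_*(a ∗ b)`. -/
def reflConvM (a b : MeasureTheory.SignedMeasure ℝ) : MeasureTheory.SignedMeasure ℝ :=
  (mConv a b).map reflMap

/-- The annealed transfer operator of the system with additive noise:
`L_{ρ,T} m = ρ ∗̂ (L_T m)` where `L_T` is the pushforward by `T`. -/
def annealedM (ρ : ℝ → ℝ) (T : ℝ → ℝ) (m : MeasureTheory.SignedMeasure ℝ) :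
    MeasureTheory.SignedMeasure ℝ :=
  reflConvM (densSM ρ) (m.map T)

/-- `T` is a nonsingular Borel self-map of `[0,1]`. -/
def Nonsingular (T : ℝ → ℝ) : Prop :=
  Measurable T ∧ Set.MapsTo T II II ∧
    ∀ A : Set ℝ, MeasurableSet A → MeasureTheory.volume A = 0 → volI (T ⁻¹' A) = 0

/-- A Markov operator: positive and total-mass preserving. -/
def IsMarkov (L : MeasureTheory.SignedMeasure ℝ → MeasureTheory.SignedMeasure ℝ) : Prop :=
  (∀ m : MeasureTheory.SignedMeasure ℝ, (∀ A : Set ℝ, 0 ≤ m A) → ∀ A : Set ℝ, 0 ≤ L m A) ∧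
  (∀ m : MeasureTheory.SignedMeasure ℝ, L m Set.univ = m Set.univ)

/-- A BV noise kernel which is a probability density on `[0,1]`. -/
def IsBVKernel (ρ : ℝ → ℝ) : Prop :=
  MeasureTheory.Integrable ρ MeasureTheory.volume ∧ (∀ x, x ∉ II → ρ x = 0) ∧
    (∀ x, 0 ≤ ρ x) ∧ (∫ x, ρ x) = 1 ∧ eVariationOn ρ II ≠ ⊤

/-!
The error term is itself a reflected convolution: `∗̂` is linear in its first argument, so
`ξ⁻¹ • (L_{ξ,T} f₀ - L_{0,T} f₀) - ρ̇ ∗̂ L_T f₀ = (ξ⁻¹ • (ρ_ξ - ρ₀) - ρ̇) ∗̂ L_T f₀`.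
Both norms satisfy `‖a ∗̂ b‖ ≤ ‖a‖ · ‖b‖_TV`: for the total variation this is multiplicativity of
mass under convolution; for the Wasserstein–Kantorovich norm, integrating a test function `g`
against `a ∗̂ b` integrates `y ↦ ∫ g (π (x + y)) da(x)` against `b`, and `x ↦ g (π (x + y))` is
again a test function because the reflection `π` is `1`-Lipschitz.
-/

namespace MeasureTheory

variable {X Y : Type*} [MeasurableSpace X] [MeasurableSpace Y]

lemma Integrable.of_abs_le {g : X → ℝ} {C : ℝ} (hg : Measurable g) (hb : ∀ x, |g x| ≤ C)
    (μ : Measure X) [IsFiniteMeasure μ] : Integrable g μ :=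
  .of_bound hg.aestronglyMeasurable C (.of_forall hb)

lemma Measure.add_eq_add_of_toSignedMeasure_sub_eq {P Q P' Q' : Measure X} [IsFiniteMeasure P]
    [IsFiniteMeasure Q] [IsFiniteMeasure P'] [IsFiniteMeasure Q']
    (h : P.toSignedMeasure - Q.toSignedMeasure = P'.toSignedMeasure - Q'.toSignedMeasure) :
    P + Q' = P' + Q := by
  rwa [← Measure.toSignedMeasure_eq_toSignedMeasure_iff, Measure.toSignedMeasure_add,
    Measure.toSignedMeasure_add, ← sub_eq_sub_iff_add_eq_add]

lemma Measure.toSignedMeasure_map (μ : Measure X) [IsFiniteMeasure μ] {φ : X → Y}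
    (hφ : Measurable φ) : μ.toSignedMeasure.map φ = (μ.map φ).toSignedMeasure := by
  ext s hs
  rw [VectorMeasure.map_apply _ hφ hs, Measure.toSignedMeasure_apply_measurable (hφ hs),
    Measure.toSignedMeasure_apply_measurable hs, map_measureReal_apply hφ hs]

namespace SignedMeasure

lemma eq_posPart_sub_negPart (s : SignedMeasure X) :
    s = s.toJordanDecomposition.posPart.toSignedMeasure
      - s.toJordanDecomposition.negPart.toSignedMeasure :=
  s.toSignedMeasure_toJordanDecomposition.symm

lemma posPart_add_eq_of_eq_sub {s : SignedMeasure X} {P Q : Measure X} [IsFiniteMeasure P]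
    [IsFiniteMeasure Q] (h : s = P.toSignedMeasure - Q.toSignedMeasure) :
    s.toJordanDecomposition.posPart + Q = P + s.toJordanDecomposition.negPart :=
  Measure.add_eq_add_of_toSignedMeasure_sub_eq <| s.eq_posPart_sub_negPart.symm.trans h

lemma map_eq_sub (s : SignedMeasure X) {φ : X → Y} (hφ : Measurable φ) :
    s.map φ = (s.toJordanDecomposition.posPart.map φ).toSignedMeasure
      - (s.toJordanDecomposition.negPart.map φ).toSignedMeasure := by
  rw [← Measure.toSignedMeasure_map _ hφ, ← Measure.toSignedMeasure_map _ hφ]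
  conv_lhs => rw [s.eq_posPart_sub_negPart]
  exact map_sub (VectorMeasure.mapGm φ) _ _

/-- `Wnorm s` is the supremum of `s.jordanIntegral g` over the test functions `g`. -/
def jordanIntegral (s : SignedMeasure X) (g : X → ℝ) : ℝ :=
  ∫ x, g x ∂s.toJordanDecomposition.posPart - ∫ x, g x ∂s.toJordanDecomposition.negPart

lemma jordanIntegral_neg (s : SignedMeasure X) (g : X → ℝ) :
    s.jordanIntegral (fun x => -g x) = -s.jordanIntegral g := by
  simp only [jordanIntegral, integral_neg]
  ring

lemma jordanIntegral_eq_of_eq_sub {s : SignedMeasure X} {P Q : Measure X} [IsFiniteMeasure P]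
    [IsFiniteMeasure Q] (h : s = P.toSignedMeasure - Q.toSignedMeasure) {g : X → ℝ} {C : ℝ}
    (hg : Measurable g) (hb : ∀ x, |g x| ≤ C) :
    s.jordanIntegral g = ∫ x, g x ∂P - ∫ x, g x ∂Q := by
  have hsum := congrArg (fun μ => ∫ x, g x ∂μ) (posPart_add_eq_of_eq_sub h)
  simp only [integral_add_measure (Integrable.of_abs_le hg hb _)
    (Integrable.of_abs_le hg hb _)] at hsum
  rw [jordanIntegral]
  linarith

lemma jordanIntegral_map (s : SignedMeasure X) {φ : X → Y} (hφ : Measurable φ) {g : Y → ℝ}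
    {C : ℝ} (hg : Measurable g) (hb : ∀ y, |g y| ≤ C) :
    jordanIntegral (s.map φ) g = s.jordanIntegral (fun x => g (φ x)) := by
  rw [jordanIntegral_eq_of_eq_sub (s.map_eq_sub hφ) hg hb, jordanIntegral,
    integral_map hφ.aemeasurable hg.aestronglyMeasurable,
    integral_map hφ.aemeasurable hg.aestronglyMeasurable]

end SignedMeasure

end MeasureTheory

open MeasureTheory SignedMeasure

lemma tvNorm_eq_add (s : SignedMeasure ℝ) :
    tvNorm s = (s.toJordanDecomposition.posPart Set.univ).toReal
      + (s.toJordanDecomposition.negPart Set.univ).toReal := by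
  rw [tvNorm, totalVariation, Measure.add_apply,
    ENNReal.toReal_add (measure_ne_top _ _) (measure_ne_top _ _)]

lemma tvNorm_nonneg (s : SignedMeasure ℝ) : 0 ≤ tvNorm s := ENNReal.toReal_nonneg

lemma abs_jordanIntegral_le (s : SignedMeasure ℝ) {g : ℝ → ℝ} {C : ℝ} (hb : ∀ x, |g x| ≤ C) :
    |s.jordanIntegral g| ≤ C * tvNorm s := by
  have hbound (μ : Measure ℝ) [IsFiniteMeasure μ] : |∫ x, g x ∂μ| ≤ C * (μ Set.univ).toReal :=
    norm_integral_le_of_norm_le_const (f := g) (.of_forall hb)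
  rw [tvNorm_eq_add, mul_add]
  exact (abs_sub _ _).trans (add_le_add (hbound _) (hbound _))

lemma posConv_add_left (P Q R : Measure ℝ) [SFinite P] [SFinite Q] [SFinite R] :
    posConv (P + Q) R = posConv P R + posConv Q R := by
  rw [posConv, Measure.add_prod, Measure.map_add _ _ measurable_add]
  rfl

lemma posConv_smul_left (c : ℝ≥0) (P Q : Measure ℝ) [SFinite Q] :
    posConv (c • P) Q = c • posConv P Q := by
  rw [posConv, Measure.prod_smul_left, Measure.map_smul]
  rfl

lemma posConv_univ (P Q : Measure ℝ) [SFinite Q] :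
    posConv P Q Set.univ = P Set.univ * Q Set.univ := by
  rw [posConv, Measure.map_apply measurable_add MeasurableSet.univ, Set.preimage_univ,
    ← Set.univ_prod_univ, Measure.prod_prod]

lemma integral_posConv (P Q : Measure ℝ) [IsFiniteMeasure P] [IsFiniteMeasure Q] {g : ℝ → ℝ}
    {C : ℝ} (hg : Measurable g) (hb : ∀ x, |g x| ≤ C) :
    ∫ z, g z ∂posConv P Q = ∫ y, ∫ x, g (x + y) ∂P ∂Q := by
  rw [posConv, integral_map measurable_add.aemeasurable hg.aestronglyMeasurable,
    integral_prod_symm (fun z : ℝ × ℝ => g (z.1 + z.2))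
      (Integrable.of_abs_le (hg.comp measurable_add) (fun _ => hb _) _)]

def posConvSigned (P : Measure ℝ) [IsFiniteMeasure P] (b : SignedMeasure ℝ) : SignedMeasure ℝ :=
  (posConv P b.toJordanDecomposition.posPart).toSignedMeasure
    - (posConv P b.toJordanDecomposition.negPart).toSignedMeasure

lemma posConvSigned_add_left (P Q : Measure ℝ) [IsFiniteMeasure P] [IsFiniteMeasure Q]
    (b : SignedMeasure ℝ) :
    posConvSigned (P + Q) b = posConvSigned P b + posConvSigned Q b := by
  simp only [posConvSigned, posConv_add_left, Measure.toSignedMeasure_add]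
  abel

lemma posConvSigned_smul_left (c : ℝ≥0) (P : Measure ℝ) [IsFiniteMeasure P]
    (b : SignedMeasure ℝ) : posConvSigned (c • P) b = (c : ℝ) • posConvSigned P b := by
  ext s hs
  simp [posConvSigned, posConv_smul_left, Measure.toSignedMeasure_sub_apply hs, hs, mul_sub,
    NNReal.smul_def]

lemma mConv_eq_posConvSigned_sub (a b : SignedMeasure ℝ) :
    mConv a b = posConvSigned a.toJordanDecomposition.posPart b
      - posConvSigned a.toJordanDecomposition.negPart b := by
  simp only [mConv, posConvSigned, Measure.toSignedMeasure_add]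
  abel

/-- Since `posConvSigned` is additive in the measure, `mConv a b` may be computed from any
decomposition of `a` as a difference of finite measures, not only the Jordan one. -/
lemma mConv_eq_of_eq_sub {a : SignedMeasure ℝ} {P Q : Measure ℝ} [IsFiniteMeasure P]
    [IsFiniteMeasure Q] (h : a = P.toSignedMeasure - Q.toSignedMeasure) (b : SignedMeasure ℝ) :
    mConv a b = posConvSigned P b - posConvSigned Q b := by
  have hsum : posConvSigned (a.toJordanDecomposition.posPart + Q) b
      = posConvSigned (P + a.toJordanDecomposition.negPart) b := by
    simp only [posPart_add_eq_of_eq_sub h]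
  simp only [posConvSigned_add_left] at hsum
  rw [mConv_eq_posConvSigned_sub, sub_eq_sub_iff_add_eq_add, hsum]

lemma mConv_sub_left (a a' b : SignedMeasure ℝ) :
    mConv (a - a') b = mConv a b - mConv a' b := by
  have h : a - a' = (a.toJordanDecomposition.posPart
        + a'.toJordanDecomposition.negPart).toSignedMeasure
      - (a.toJordanDecomposition.negPart + a'.toJordanDecomposition.posPart).toSignedMeasure := by
    rw [Measure.toSignedMeasure_add, Measure.toSignedMeasure_add]
    conv_lhs => rw [a.eq_posPart_sub_negPart, a'.eq_posPart_sub_negPart]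
    abel
  rw [mConv_eq_of_eq_sub h, mConv_eq_posConvSigned_sub a, mConv_eq_posConvSigned_sub a',
    posConvSigned_add_left, posConvSigned_add_left]
  abel

lemma mConv_smul_left {c : ℝ} (hc : 0 ≤ c) (a b : SignedMeasure ℝ) :
    mConv (c • a) b = c • mConv a b := by
  lift c to ℝ≥0 using hc
  have h : (c : ℝ) • a = (c • a.toJordanDecomposition.posPart).toSignedMeasure
      - (c • a.toJordanDecomposition.negPart).toSignedMeasure := by
    rw [Measure.toSignedMeasure_smul, Measure.toSignedMeasure_smul, NNReal.smul_def,
      NNReal.smul_def]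
    conv_lhs => rw [a.eq_posPart_sub_negPart, smul_sub]
  rw [mConv_eq_of_eq_sub h, mConv_eq_posConvSigned_sub, posConvSigned_smul_left,
    posConvSigned_smul_left]
  exact (smul_sub _ _ _).symm

lemma reflConvM_sub_left (a a' b : SignedMeasure ℝ) :
    reflConvM (a - a') b = reflConvM a b - reflConvM a' b := by
  rw [reflConvM, mConv_sub_left]
  exact map_sub (VectorMeasure.mapGm reflMap) _ _

lemma reflConvM_smul_left {c : ℝ} (hc : 0 ≤ c) (a b : SignedMeasure ℝ) :
    reflConvM (c • a) b = c • reflConvM a b := by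
  rw [reflConvM, mConv_smul_left hc, VectorMeasure.map_smul]
  rfl

lemma reflMap_le_add_abs_sub (x y : ℝ) : reflMap x ≤ reflMap y + |x - y| := by
  rw [← sub_le_iff_le_add]
  refine le_ciInf fun i => ?_
  have hx : reflMap x ≤ |x - 2 * (i : ℝ)| := ciInf_le ⟨0, by rintro _ ⟨j, rfl⟩; positivity⟩ i
  linarith [abs_sub_le x y (2 * (i : ℝ))]

lemma lipschitzWith_reflMap : LipschitzWith 1 reflMap :=
  .of_le_add fun x y => reflMap_le_add_abs_sub x y

lemma measurable_reflMap : Measurable reflMap :=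
  lipschitzWith_reflMap.continuous.measurable

lemma tvNorm_reflConvM_le (a b : SignedMeasure ℝ) :
    tvNorm (reflConvM a b) ≤ tvNorm a * tvNorm b := by
  set ap := a.toJordanDecomposition.posPart
  set an := a.toJordanDecomposition.negPart
  set bp := b.toJordanDecomposition.posPart
  set bn := b.toJordanDecomposition.negPart
  set P := posConv ap bp + posConv an bn
  set Q := posConv ap bn + posConv an bp
  have hvar : (reflConvM a b).variation Set.univ ≤ P Set.univ + Q Set.univ := calc
    _ ≤ (mConv a b).variation.map reflMap Set.univ := VectorMeasure.variation_map_le _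
    _ = (P.toSignedMeasure - Q.toSignedMeasure).variation Set.univ := by
      rw [Measure.map_apply measurable_reflMap .univ, Set.preimage_univ]
      rfl
    _ ≤ P Set.univ + Q Set.univ := by
      simpa using
        VectorMeasure.variation_sub_le (μ := P.toSignedMeasure) (ν := Q.toSignedMeasure) Set.univ
  have hmass :
      P Set.univ + Q Set.univ = a.totalVariation Set.univ * b.totalVariation Set.univ := by
    simp only [P, Q, totalVariation, Measure.add_apply, posConv_univ]
    ring
  rw [tvNorm, tvNorm, tvNorm, ← ENNReal.toReal_mul, totalVariation_eq_variation]
  exact ENNReal.toReal_mono (by finiteness) (hvar.trans_eq hmass)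

lemma jordanIntegral_mConv (a b : SignedMeasure ℝ) {g : ℝ → ℝ} {C : ℝ} (hg : Measurable g)
    (hb : ∀ x, |g x| ≤ C) :
    jordanIntegral (mConv a b) g
      = b.jordanIntegral (fun y => a.jordanIntegral (fun x => g (x + y))) := by
  have hgint := Integrable.of_abs_le hg hb
  have hint (P Q : Measure ℝ) [IsFiniteMeasure P] [IsFiniteMeasure Q] :
      Integrable (fun y => ∫ x, g (x + y) ∂P) Q :=
    (Integrable.of_abs_le (hg.comp measurable_add) (fun _ => hb _) _).integral_prod_right
  rw [mConv, jordanIntegral_eq_of_eq_sub rfl hg hb, integral_add_measure (hgint _) (hgint _),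
    integral_add_measure (hgint _) (hgint _)]
  simp only [integral_posConv _ _ hg hb, jordanIntegral]
  rw [integral_sub (hint _ _) (hint _ _), integral_sub (hint _ _) (hint _ _)]
  ring

lemma jordanIntegral_reflConvM (a b : SignedMeasure ℝ) {g : ℝ → ℝ} {C : ℝ} (hg : Measurable g)
    (hb : ∀ x, |g x| ≤ C) :
    jordanIntegral (reflConvM a b) g
      = b.jordanIntegral (fun y => a.jordanIntegral (fun x => g (reflMap (x + y)))) := by
  rw [reflConvM, jordanIntegral_map _ measurable_reflMap hg hb,
    jordanIntegral_mConv _ _ (g := fun x => g (reflMap x)) (hg.comp measurable_reflMap)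
      (fun _ => hb _)]

lemma jordanIntegral_le_Wnorm (s : SignedMeasure ℝ) {g : ℝ → ℝ} (hb : ∀ x, |g x| ≤ 1)
    (hg : LipschitzWith 1 g) : s.jordanIntegral g ≤ Wnorm s := by
  refine le_ciSup (f := fun g : {g : ℝ → ℝ // (∀ x, |g x| ≤ 1) ∧ LipschitzWith 1 g} =>
    s.jordanIntegral g.1) ⟨tvNorm s, ?_⟩ ⟨g, hb, hg⟩
  rintro _ ⟨g, rfl⟩
  simpa using (le_abs_self _).trans (abs_jordanIntegral_le s g.2.1)

lemma abs_jordanIntegral_le_Wnorm (s : SignedMeasure ℝ) {g : ℝ → ℝ} (hb : ∀ x, |g x| ≤ 1)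
    (hg : LipschitzWith 1 g) : |s.jordanIntegral g| ≤ Wnorm s := by
  refine abs_le'.2 ⟨jordanIntegral_le_Wnorm s hb hg, ?_⟩
  rw [← jordanIntegral_neg]
  exact jordanIntegral_le_Wnorm s (by simpa using hb) hg.neg

lemma lipschitzWith_one_const_zero : LipschitzWith 1 fun _ : ℝ => (0 : ℝ) :=
  (LipschitzWith.const 0).weaken zero_le_one

lemma Wnorm_nonneg (s : SignedMeasure ℝ) : 0 ≤ Wnorm s := by
  simpa [jordanIntegral] using jordanIntegral_le_Wnorm s (by simp) lipschitzWith_one_const_zero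

lemma Wnorm_reflConvM_le (a b : SignedMeasure ℝ) :
    Wnorm (reflConvM a b) ≤ Wnorm a * tvNorm b := by
  have : Nonempty {g : ℝ → ℝ // (∀ x, |g x| ≤ 1) ∧ LipschitzWith 1 g} :=
    ⟨⟨_, by simp, lipschitzWith_one_const_zero⟩⟩
  refine ciSup_le fun ⟨g, hb, hg⟩ => ?_
  have hshift (y : ℝ) : LipschitzWith 1 fun x => g (reflMap (x + y)) := by
    have h := (hg.comp lipschitzWith_reflMap).comp (isometry_add_right y).lipschitz
    rwa [one_mul, one_mul] at h
  calc jordanIntegral (reflConvM a b) g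
      = b.jordanIntegral (fun y => a.jordanIntegral (fun x => g (reflMap (x + y)))) :=
        jordanIntegral_reflConvM a b hg.continuous.measurable hb
    _ ≤ Wnorm a * tvNorm b := (le_abs_self _).trans <| abs_jordanIntegral_le b
        fun y => abs_jordanIntegral_le_Wnorm a (fun _ => hb _) (hshift y)

theorem noise_perturbation_derivative_general
    (N : MeasureTheory.SignedMeasure ℝ → ℝ) (hN : N = tvNorm ∨ N = Wnorm)
    (ρ : ℝ → ℝ → ℝ)
    (ρdot : MeasureTheory.SignedMeasure ℝ)
    (hdot : Filter.Tendsto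
      (fun ξ : ℝ => N (ξ⁻¹ • (densSM (ρ ξ) - densSM (ρ 0)) - ρdot))
      (nhdsWithin 0 (Set.Ioi 0)) (nhds 0))
    (T : ℝ → ℝ)
    (f₀ : ℝ → ℝ) :
    Filter.Tendsto
      (fun ξ : ℝ => N (ξ⁻¹ • (annealedM (ρ ξ) T (densSM f₀) - annealedM (ρ 0) T (densSM f₀))
        - reflConvM ρdot ((densSM f₀).map T)))
      (nhdsWithin 0 (Set.Ioi 0)) (nhds 0) := by
  set B := (densSM f₀).map T
  obtain ⟨hN_nonneg, hN_reflConvM⟩ :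
      (∀ s, 0 ≤ N s) ∧ ∀ s, N (reflConvM s B) ≤ N s * tvNorm B := by
    rcases hN with rfl | rfl
    exacts [⟨tvNorm_nonneg, (tvNorm_reflConvM_le · B)⟩, ⟨Wnorm_nonneg, (Wnorm_reflConvM_le · B)⟩]
  have hbound := hdot.mul_const (tvNorm B)
  rw [zero_mul] at hbound
  refine squeeze_zero' (.of_forall fun _ => hN_nonneg _) ?_ hbound
  filter_upwards [self_mem_nhdsWithin] with ξ (hξ : 0 < ξ)
  rw [annealedM, annealedM, ← reflConvM_sub_left, ← reflConvM_smul_left (inv_nonneg.2 hξ.le),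
    ← reflConvM_sub_left]
  exact hN_reflConvM _

/-- derivative operator for noise perturbations: if `(ρ_ξ − ρ₀)/ξ → ρ̇` in
the weak norm (`L¹` or Wasserstein–Kantorovich), then
`(L_{ξ,T} − L_{0,T})f₀/ξ → ρ̇ ∗̂ L_T f₀` in the same norm. -/
theorem noise_perturbation_derivative
    (N : MeasureTheory.SignedMeasure ℝ → ℝ) (hN : N = tvNorm ∨ N = Wnorm)
    (ρ : ℝ → ℝ → ℝ) (hρ : ∀ ξ : ℝ, 0 ≤ ξ → IsBVKernel (ρ ξ))
    (ρdot : MeasureTheory.SignedMeasure ℝ)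
    (hdot : Filter.Tendsto
      (fun ξ : ℝ => N (ξ⁻¹ • (densSM (ρ ξ) - densSM (ρ 0)) - ρdot))
      (nhdsWithin 0 (Set.Ioi 0)) (nhds 0))
    (T : ℝ → ℝ) (hT : Nonsingular T)
    (f₀ : ℝ → ℝ) (hf₀ : MeasureTheory.Integrable f₀ MeasureTheory.volume)
    (hf₀supp : ∀ x, x ∉ II → f₀ x = 0) :
    Filter.Tendsto
      (fun ξ : ℝ => N (ξ⁻¹ • (annealedM (ρ ξ) T (densSM f₀) - annealedM (ρ 0) T (densSM f₀))
        - reflConvM ρdot ((densSM f₀).map T)))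
      (nhdsWithin 0 (Set.Ioi 0)) (nhds 0) :=
  noise_perturbation_derivative_general N hN ρ ρdot hdot T f₀
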